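/- Let p be an odd prime, n ≥ 1, and R a commutative ring in which p·1 = 0. Let β : Q(R) → G(R) be the surjective group homomorphism sending a pair (f₁, f₂) (with f₁ = ε + Σ_{i=0}^{n−1} a_i X^{p^i}, f₂ = X + Σ_{i=1}^{n−1} b_i X^{p^i} in R[ε,X]/(ε², X^{p^n})) to the class of f₂. Then the kernel of β consists exactly of the pairs (ε + Σ_{i=0}^{n−1} a_i X^{p^i}, X) with a_i ∈ R, and the map sending such a pair to (a_0, …, a_{n−1}) is a group isomorphism from ker β onto the additive group R^n; in particular ker β is abelian. -/
import Mathlib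


open Polynomial

lemma aux_coeff_span {R : Type} [CommRing R] {N : ℕ} {q : Polynomial R}
    (hq : q ∈ Ideal.span {(X : Polynomial R) ^ N}) {m : ℕ} (hm : m < N) :
    q.coeff m = 0 := by
  obtain ⟨g, hg⟩ := Ideal.mem_span_singleton'.mp hq
  rw [← hg, Polynomial.coeff_mul_X_pow']
  simp [Nat.not_le.mpr hm]

lemma aux_sum_span {R : Type} [CommRing R] {p n : ℕ} (hp : 2 ≤ p) (c : ℕ → R)
    (s : Finset ℕ) (hs : ∀ i ∈ s, i < n)
    (h : (∑ i ∈ s, C (c i) * X ^ (p ^ i)) ∈ Ideal.span {(X : Polynomial R) ^ (p ^ n)}) :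
    ∀ i ∈ s, c i = 0 := by
  intro i hi
  have hlt : p ^ i < p ^ n := Nat.pow_lt_pow_right (by omega) (hs i hi)
  have hcoeff := aux_coeff_span h hlt
  rw [Polynomial.finset_sum_coeff, Finset.sum_eq_single i] at hcoeff
  · simpa using hcoeff
  · intro j hj hji
    simp only [Polynomial.coeff_C_mul, Polynomial.coeff_X_pow]
    rw [if_neg, mul_zero]
    intro hpe
    exact hji (Nat.pow_right_injective hp hpe.symm)
  · intro h'
    exact absurd hi h'

lemma aux_mv_mem {R : Type} [CommRing R] {p n : ℕ} (hp : 2 ≤ p) (c : ℕ → R)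
    (h : (∑ i ∈ Finset.range n, MvPolynomial.C (c i) * MvPolynomial.X 1 ^ (p ^ i))
      ∈ Ideal.span {(MvPolynomial.X 0 : MvPolynomial (Fin 2) R) ^ 2,
        MvPolynomial.X 1 ^ (p ^ n)}) :
    ∀ i < n, c i = 0 := by
  set φ : MvPolynomial (Fin 2) R →+* Polynomial R :=
    MvPolynomial.eval₂Hom Polynomial.C (fun j : Fin 2 => if j = 0 then 0 else X) with hφ
  have hmapI : Ideal.map φ (Ideal.span {(MvPolynomial.X 0 : MvPolynomial (Fin 2) R) ^ 2,
      MvPolynomial.X 1 ^ (p ^ n)}) ≤ Ideal.span {(X : Polynomial R) ^ (p ^ n)} := by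
    rw [Ideal.map_span, Set.image_pair]
    apply Ideal.span_le.mpr
    rintro q hq
    simp only [Set.mem_insert_iff, Set.mem_singleton_iff] at hq
    rcases hq with rfl | rfl
    · have : φ (MvPolynomial.X 0 ^ 2) = 0 := by simp [hφ]
      rw [this]; exact Ideal.zero_mem _
    · have : φ (MvPolynomial.X 1 ^ (p ^ n)) = X ^ (p ^ n) := by simp [hφ]
      rw [this]; exact Ideal.subset_span rfl
  have hmem : φ (∑ i ∈ Finset.range n, MvPolynomial.C (c i) * MvPolynomial.X 1 ^ (p ^ i))
      ∈ Ideal.span {(X : Polynomial R) ^ (p ^ n)} := hmapI (Ideal.mem_map_of_mem φ h)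
  have heq : φ (∑ i ∈ Finset.range n, MvPolynomial.C (c i) * MvPolynomial.X 1 ^ (p ^ i))
      = ∑ i ∈ Finset.range n, C (c i) * X ^ (p ^ i) := by
    rw [map_sum]
    apply Finset.sum_congr rfl
    intro i _
    simp [hφ]
  rw [heq] at hmem
  intro i hi
  exact aux_sum_span hp c (Finset.range n) (fun j hj => Finset.mem_range.mp hj) hmem i
    (Finset.mem_range.mpr hi)

/-- With `Q(R)`, `G(R)` and the surjective group homomorphism
`β : Q(R) → G(R)`, `(f₁, f₂) ↦ class of f₂`, as before (identity of `G(R)` = class of `X`):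
the kernel of `β` consists exactly of the pairs `(ε + Σ_{i=0}^{n-1} a_i X^(p^i), X)`, and the
map sending such a pair to `(a_0, …, a_{n-1})` is a group isomorphism from `ker β` onto the
additive group `R^n`; in particular `ker β` is abelian. -/
theorem stmt_10 (p n : ℕ) (hp : p.Prime) (hodd : Odd p) (hn : 1 ≤ n)
    (R : Type) [CommRing R] (hpR : (p : R) = 0)
    (I : Ideal (MvPolynomial (Fin 2) R))
    (hI : I = Ideal.span {MvPolynomial.X 0 ^ 2, MvPolynomial.X 1 ^ (p ^ n)})
    (F1 F2 : (ℕ → R) → MvPolynomial (Fin 2) R)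
    (hF1 : ∀ a, F1 a = MvPolynomial.X 0 +
      ∑ i ∈ Finset.range n, MvPolynomial.C (a i) * MvPolynomial.X 1 ^ (p ^ i))
    (hF2 : ∀ b, F2 b = MvPolynomial.X 1 +
      ∑ i ∈ Finset.Ico 1 n, MvPolynomial.C (b i) * MvPolynomial.X 1 ^ (p ^ i))
    (Q : Set ((MvPolynomial (Fin 2) R ⧸ I) × (MvPolynomial (Fin 2) R ⧸ I)))
    (hQ : Q = {q | ∃ a b : ℕ → R,
      q = (Ideal.Quotient.mk I (F1 a), Ideal.Quotient.mk I (F2 b))})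
    (J : Ideal (Polynomial R))
    (hJ : J = Ideal.span {(X : Polynomial R) ^ (p ^ n)})
    (f2p : (ℕ → R) → Polynomial R)
    (hf2p : ∀ b, f2p b = X + ∑ k ∈ Finset.Ico 1 n, C (b k) * X ^ (p ^ k))
    (G : Set (Polynomial R ⧸ J))
    (hG : G = {q | ∃ b : ℕ → R, q = Ideal.Quotient.mk J (f2p b)})
    (mulQ : Q → Q → Q)
    (hmulQ : ∀ (a b c d : ℕ → R) (x y : Q),
      x.1 = (Ideal.Quotient.mk I (F1 a), Ideal.Quotient.mk I (F2 b)) →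
      y.1 = (Ideal.Quotient.mk I (F1 c), Ideal.Quotient.mk I (F2 d)) →
      (mulQ x y).1 =
        (Ideal.Quotient.mk I (F1 a + ∑ i ∈ Finset.range n,
            MvPolynomial.C (c i) * (F2 b) ^ (p ^ i)),
         Ideal.Quotient.mk I (F2 b + ∑ i ∈ Finset.Ico 1 n,
            MvPolynomial.C (d i) * (F2 b) ^ (p ^ i))))
    (β : Q → G)
    (hβ : ∀ (a b : ℕ → R) (x : Q),
      x.1 = (Ideal.Quotient.mk I (F1 a), Ideal.Quotient.mk I (F2 b)) →
      (β x).1 = Ideal.Quotient.mk J (f2p b))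
    -- the identity of G(R) is the class of X
    (oneG : G) (hOneG : oneG.1 = Ideal.Quotient.mk J X) :
    -- the kernel of β consists exactly of the pairs (ε + Σ a_i X^(p^i), X)
    (∀ x : Q, β x = oneG ↔ ∃ a : ℕ → R,
      x.1 = (Ideal.Quotient.mk I (F1 a), Ideal.Quotient.mk I (MvPolynomial.X 1))) ∧
    -- the map (ε + Σ a_i X^(p^i), X) ↦ (a_0, …, a_{n-1}) is a group isomorphism
    -- from ker β onto the additive group R^n
    (∃ e : {x : Q // β x = oneG} → (Fin n → R),
      Function.Bijective e ∧
      (∀ (x : {x : Q // β x = oneG}) (a : ℕ → R),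
        (x : Q).1 = (Ideal.Quotient.mk I (F1 a), Ideal.Quotient.mk I (MvPolynomial.X 1)) →
        e x = fun i : Fin n => a (i : ℕ)) ∧
      (∀ x y z : {x : Q // β x = oneG}, mulQ x.1 y.1 = z.1 → e z = e x + e y)) ∧
    -- in particular ker β is abelian
    (∀ x y : Q, β x = oneG → β y = oneG → mulQ x y = mulQ y x) := by
  have hp2 : 2 ≤ p := hp.two_le
  have hF20 : F2 (fun _ => 0) = MvPolynomial.X 1 := by
    rw [hF2]
    simp
  have hf2p0 : f2p (fun _ => 0) = X := by
    rw [hf2p]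
    simp
  -- uniqueness of the a-coordinates
  have F1_unique : ∀ a a' : ℕ → R,
      Ideal.Quotient.mk I (F1 a) = Ideal.Quotient.mk I (F1 a') → ∀ i < n, a i = a' i := by
    intro a a' hmk i hi
    have hsub : F1 a - F1 a' ∈ I := Ideal.Quotient.eq.mp hmk
    have hdiff : F1 a - F1 a' =
        ∑ j ∈ Finset.range n, MvPolynomial.C (a j - a' j) * MvPolynomial.X 1 ^ (p ^ j) := by
      rw [hF1, hF1, add_sub_add_left_eq_sub, ← Finset.sum_sub_distrib]
      apply Finset.sum_congr rfl
      intro j _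
      rw [← sub_mul, ← map_sub]
    rw [hdiff, hI] at hsub
    have := aux_mv_mem hp2 (fun j => a j - a' j) hsub i hi
    exact sub_eq_zero.mp this
  -- kernel characterization
  have ker_iff : ∀ x : Q, β x = oneG ↔ ∃ a : ℕ → R,
      x.1 = (Ideal.Quotient.mk I (F1 a), Ideal.Quotient.mk I (MvPolynomial.X 1)) := by
    intro x
    constructor
    · intro hker
      have memQ : ∀ z ∈ Q, ∃ a b : ℕ → R,
          z = (Ideal.Quotient.mk I (F1 a), Ideal.Quotient.mk I (F2 b)) := by
        rw [hQ]
        exact fun z hz => hz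
      obtain ⟨a, b, hx⟩ := memQ x.1 x.2
      have hβx := hβ a b x hx
      have hmkJ : Ideal.Quotient.mk J (f2p b) = Ideal.Quotient.mk J X := by
        rw [← hβx, hker, hOneG]
      have hsub : f2p b - X ∈ J := Ideal.Quotient.eq.mp hmkJ
      have hdiff : f2p b - X = ∑ k ∈ Finset.Ico 1 n, C (b k) * X ^ (p ^ k) := by
        rw [hf2p, add_sub_cancel_left]
      rw [hdiff, hJ] at hsub
      have hb : ∀ k ∈ Finset.Ico 1 n, b k = 0 :=
        aux_sum_span hp2 b _ (fun k hk => (Finset.mem_Ico.mp hk).2) hsub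
      refine ⟨a, ?_⟩
      rw [hx]
      have : F2 b = MvPolynomial.X 1 := by
        rw [hF2, Finset.sum_eq_zero, add_zero]
        intro k hk
        rw [hb k hk]
        simp
      rw [this]
    · rintro ⟨a, hx⟩
      have hx' : x.1 = (Ideal.Quotient.mk I (F1 a),
          Ideal.Quotient.mk I (F2 (fun _ => 0))) := by rw [hx, hF20]
      have hβx := hβ a (fun _ => 0) x hx'
      apply Subtype.ext
      rw [hβx, hf2p0, hOneG]
  -- mul on the kernel
  have mul_ker : ∀ (x y : Q) (a c : ℕ → R),
      x.1 = (Ideal.Quotient.mk I (F1 a), Ideal.Quotient.mk I (MvPolynomial.X 1)) →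
      y.1 = (Ideal.Quotient.mk I (F1 c), Ideal.Quotient.mk I (MvPolynomial.X 1)) →
      (mulQ x y).1 = (Ideal.Quotient.mk I (F1 (fun i => a i + c i)),
        Ideal.Quotient.mk I (MvPolynomial.X 1)) := by
    intro x y a c hx hy
    have hx' : x.1 = (Ideal.Quotient.mk I (F1 a),
        Ideal.Quotient.mk I (F2 (fun _ => 0))) := by rw [hx, hF20]
    have hy' : y.1 = (Ideal.Quotient.mk I (F1 c),
        Ideal.Quotient.mk I (F2 (fun _ => 0))) := by rw [hy, hF20]
    have hm := hmulQ a (fun _ => 0) c (fun _ => 0) x y hx' hy'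
    rw [hm, hF20]
    have h1 : F1 a + ∑ i ∈ Finset.range n,
        MvPolynomial.C (c i) * (MvPolynomial.X 1 : MvPolynomial (Fin 2) R) ^ (p ^ i)
        = F1 (fun i => a i + c i) := by
      rw [hF1, hF1, add_assoc, ← Finset.sum_add_distrib]
      congr 1
      apply Finset.sum_congr rfl
      intro i _
      rw [← add_mul, ← map_add]
    have h2 : (MvPolynomial.X 1 : MvPolynomial (Fin 2) R) + ∑ i ∈ Finset.Ico 1 n,
        MvPolynomial.C ((fun _ => (0 : R)) i) * (MvPolynomial.X 1 : MvPolynomial (Fin 2) R) ^ (p ^ i)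
        = MvPolynomial.X 1 := by
      simp
    rw [h1, h2]
  refine ⟨ker_iff, ?_, ?_⟩
  · -- the isomorphism
    have key : ∀ x : {x : Q // β x = oneG}, ∃ a : ℕ → R,
        (x : Q).1 = (Ideal.Quotient.mk I (F1 a), Ideal.Quotient.mk I (MvPolynomial.X 1)) :=
      fun x => (ker_iff x.1).mp x.2
    refine ⟨fun x => fun i => Classical.choose (key x) i, ?_, ?_, ?_⟩
    · constructor
      · -- injective
        intro x y hxy
        have hx := Classical.choose_spec (key x)
        have hy := Classical.choose_spec (key y)
        apply Subtype.ext
        apply Subtype.ext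
        rw [hx, hy]
        have hagree : ∀ i < n, Classical.choose (key x) i = Classical.choose (key y) i := by
          intro i hi
          exact congrFun hxy ⟨i, hi⟩
        have : F1 (Classical.choose (key x)) = F1 (Classical.choose (key y)) := by
          rw [hF1, hF1]
          congr 1
          apply Finset.sum_congr rfl
          intro i hi
          rw [hagree i (Finset.mem_range.mp hi)]
        rw [this]
      · -- surjective
        intro v
        set a : ℕ → R := fun i => if h : i < n then v ⟨i, h⟩ else 0 with ha
        have hxQ : (Ideal.Quotient.mk I (F1 a),
            Ideal.Quotient.mk I (MvPolynomial.X 1)) ∈ Q := by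
          rw [hQ]
          exact ⟨a, fun _ => 0, by rw [hF20]⟩
        let x : Q := ⟨_, hxQ⟩
        have hx1 : x.1 = (Ideal.Quotient.mk I (F1 a),
            Ideal.Quotient.mk I (MvPolynomial.X 1)) := rfl
        have hker : β x = oneG := (ker_iff x).mpr ⟨a, hx1⟩
        refine ⟨⟨x, hker⟩, ?_⟩
        have hspec := Classical.choose_spec (key ⟨x, hker⟩)
        have heq : Ideal.Quotient.mk I (F1 (Classical.choose (key ⟨x, hker⟩)))
            = Ideal.Quotient.mk I (F1 a) := by
          have := hspec.symm.trans hx1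
          exact (Prod.ext_iff.mp this).1
        funext i
        have hval := F1_unique _ _ heq i i.2
        show Classical.choose (key ⟨x, hker⟩) (i : ℕ) = v i
        rw [hval]
        simp [ha, i.2]
    · -- e-characterization
      intro x a hx
      have hspec := Classical.choose_spec (key x)
      have heq : Ideal.Quotient.mk I (F1 (Classical.choose (key x)))
          = Ideal.Quotient.mk I (F1 a) := by
        have := hspec.symm.trans hx
        exact (Prod.ext_iff.mp this).1
      funext i
      exact F1_unique _ _ heq i i.2
    · -- additivity
      intro x y z hz
      have hx := Classical.choose_spec (key x)
      have hy := Classical.choose_spec (key y)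
      have hz1 : (z : Q).1 = (Ideal.Quotient.mk I
          (F1 (fun i => Classical.choose (key x) i + Classical.choose (key y) i)),
          Ideal.Quotient.mk I (MvPolynomial.X 1)) := by
        rw [← hz]
        exact mul_ker x.1 y.1 _ _ hx hy
      have hspec := Classical.choose_spec (key z)
      have heq : Ideal.Quotient.mk I (F1 (Classical.choose (key z)))
          = Ideal.Quotient.mk I
            (F1 (fun i => Classical.choose (key x) i + Classical.choose (key y) i)) := by
        have := hspec.symm.trans hz1
        exact (Prod.ext_iff.mp this).1
      funext i
      have := F1_unique _ _ heq i i.2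
      simpa using this
  · -- abelian
    intro x y hx hy
    obtain ⟨a, hxa⟩ := (ker_iff x).mp hx
    obtain ⟨c, hyc⟩ := (ker_iff y).mp hy
    apply Subtype.ext
    have hcomm : (fun i => a i + c i) = (fun i => c i + a i) := by
      funext i
      exact add_comm _ _
    rw [mul_ker x y a c hxa hyc, mul_ker y x c a hyc hxa, hcomm]
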